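/- arXiv:1510.06680 — 2 statements merged into one kernel-verified Lean document; each statement's English description precedes it below -/
import Mathlib

section
/- Let D=(Ω,B) be a supersimple 2-(n,4,λ) design, fix ∞ ∈ Ω, and let G := L_∞(D). The following are equivalent: (i) G is closed under composition (so G is a subgroup of Sym(Ω)); (ii) G = L(D) and G equals the subgroup of Sym(Ω) generated by all elementary moves [a,b] (a,b ∈ Ω); (iii) L(D) = L_x(D) for every x ∈ Ω. Furthermore, if these conditions hold, then G acts transitively on Ω and the stabilizer of ∞ in G equals π_∞(D). -/
open Equiv

variable {Ω : Type*}

/-- `(Ω, B)` is a `2-(n,4,lam)` design: `Ω` has `n` points, every line has 4 points,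
and every 2-element subset of `Ω` is contained in exactly `lam` lines. -/
def IsDesign [Fintype Ω] (B : Set (Finset Ω)) (n lam : ℕ) : Prop :=
  Fintype.card Ω = n ∧
  (∀ L ∈ B, L.card = 4) ∧
  (∀ p : Finset Ω, p.card = 2 → {L ∈ B | p ⊆ L}.ncard = lam)

/-- A design is supersimple if any two distinct lines intersect in at most two points. -/
def Supersimple [DecidableEq Ω] (B : Set (Finset Ω)) : Prop :=
  ∀ L₁ ∈ B, ∀ L₂ ∈ B, L₁ ≠ L₂ → (L₁ ∩ L₂).card ≤ 2

/-- Condition (△): the symmetric difference of two lines meeting in two points is a line. -/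
def SymmDiffCond [DecidableEq Ω] (B : Set (Finset Ω)) : Prop :=
  ∀ L₁ ∈ B, ∀ L₂ ∈ B, (L₁ ∩ L₂).card = 2 → symmDiff L₁ L₂ ∈ B

/-- The collinear triples: 3-element subsets contained in some line. -/
def collinearTriples (B : Set (Finset Ω)) : Set (Finset Ω) :=
  { t | t.card = 3 ∧ ∃ L ∈ B, t ⊆ L }

/-- `(Ω, C)` is a regular two-graph: `C` is a set of 3-element subsets, every 2-element
subset lies in exactly `μ` members of `C` for a constant `μ`, and every 4-element subset
contains exactly 0, 2 or 4 members of `C`. -/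
def IsRegularTwoGraph (C : Set (Finset Ω)) : Prop :=
  (∀ t ∈ C, t.card = 3) ∧
  (∃ μ : ℕ, ∀ p : Finset Ω, p.card = 2 → {t ∈ C | p ⊆ t}.ncard = μ) ∧
  (∀ q : Finset Ω, q.card = 4 →
    {t ∈ C | t ⊆ q}.ncard = 0 ∨ {t ∈ C | t ⊆ q}.ncard = 2 ∨ {t ∈ C | t ⊆ q}.ncard = 4)

/-- `mv a b` is the elementary move `[a,b]`: it is the identity when `a = b`; when `a ≠ b`
it interchanges `a` and `b`, interchanges `x` and `y` whenever `{a,b,x,y}` is a line, and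
fixes every point not collinear with `a, b`. -/
def IsElemMoveFn [DecidableEq Ω] (B : Set (Finset Ω)) (mv : Ω → Ω → Equiv.Perm Ω) : Prop :=
  (∀ a, mv a a = 1) ∧
  ∀ a b : Ω, a ≠ b →
    mv a b a = b ∧ mv a b b = a ∧
    (∀ x y : Ω, ({a, b, x, y} : Finset Ω) ∈ B → mv a b x = y) ∧
    (∀ x : Ω, x ≠ a → x ≠ b → (∀ L ∈ B, ¬(a ∈ L ∧ b ∈ L ∧ x ∈ L)) → mv a b x = x)

/-- The move sequence `[a, b₁, …, b_k] = [a,b₁][b₁,b₂]⋯[b_{k-1},b_k]`; the factors are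
applied left-to-right (so in Lean's convention the product is reversed). -/
def moveSeq (mv : Ω → Ω → Equiv.Perm Ω) : Ω → List Ω → Equiv.Perm Ω
  | _, [] => 1
  | a, b :: l => moveSeq mv b l * mv a b

/-- The Conway groupoid `L_x(D)`: all move sequences starting at `x`. -/
def ConwayGroupoid (mv : Ω → Ω → Equiv.Perm Ω) (x : Ω) : Set (Equiv.Perm Ω) :=
  { g | ∃ l : List Ω, g = moveSeq mv x l }

/-- The hole stabilizer `π_x(D)`: all move sequences starting and ending at `x`. -/
def holeStabilizer (mv : Ω → Ω → Equiv.Perm Ω) (x : Ω) : Set (Equiv.Perm Ω) :=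
  { g | ∃ l : List Ω, g = moveSeq mv x (l ++ [x]) }

/-- `L(D)`: the set of all move sequences. -/
def allMoveSeqs (mv : Ω → Ω → Equiv.Perm Ω) : Set (Equiv.Perm Ω) :=
  { g | ∃ (a : Ω) (l : List Ω), g = moveSeq mv a l }

/-- The set `E` of elementary moves `[a,b]` with `a ≠ b`. -/
def elemMoves (mv : Ω → Ω → Equiv.Perm Ω) : Set (Equiv.Perm Ω) :=
  { g | ∃ a b : Ω, a ≠ b ∧ g = mv a b }

/-- `\overline{x,y}`: the set of points lying on a common line with `x` and `y`. -/
def lineJoin (B : Set (Finset Ω)) (x y : Ω) : Set Ω :=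
  { z | ∃ L ∈ B, x ∈ L ∧ y ∈ L ∧ z ∈ L }

/-- A set `G` of permutations is transitive on `S`. -/
def SetTransitiveOn (G : Set (Equiv.Perm Ω)) (S : Set Ω) : Prop :=
  ∀ x ∈ S, ∀ y ∈ S, ∃ g ∈ G, g x = y

/-- `Δ` is a block for the set `G` of permutations. -/
def SetIsBlock (G : Set (Equiv.Perm Ω)) (Δ : Set Ω) : Prop :=
  ∀ g ∈ G, (⇑g) '' Δ = Δ ∨ Disjoint ((⇑g) '' Δ) Δ

/-- A set `G` of permutations is primitive on `S`: it is transitive on `S` and every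
block contained in `S` is trivial (equivalently, the only invariant partitions are the
partition into singletons and the one-part partition). -/
def SetPrimitiveOn (G : Set (Equiv.Perm Ω)) (S : Set Ω) : Prop :=
  SetTransitiveOn G S ∧
  ∀ Δ : Set Ω, Δ ⊆ S → SetIsBlock G Δ → Δ.Subsingleton ∨ Δ = S

/-- Primitivity on all of `Ω`. -/
def SetPrimitive (G : Set (Equiv.Perm Ω)) : Prop :=
  SetPrimitiveOn G Set.univ

/-- `(G, E)` is a 3-transposition group: `G` is the group generated by `E`, `E` is a
union of `G`-conjugacy classes of involutions, and any product of two members of `E`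
has order 1, 2 or 3. -/
def Is3TranspositionGroup (G E : Set (Equiv.Perm Ω)) : Prop :=
  ((Subgroup.closure E : Subgroup (Equiv.Perm Ω)) : Set (Equiv.Perm Ω)) = G ∧
  (∀ e ∈ E, orderOf e = 2) ∧
  (∀ g ∈ G, ∀ e ∈ E, g * e * g⁻¹ ∈ E) ∧
  (∀ g ∈ E, ∀ h ∈ E, orderOf (g * h) = 1 ∨ orderOf (g * h) = 2 ∨ orderOf (g * h) = 3)

/-- Two designs are isomorphic: a bijection of the point sets carrying lines to lines. -/
def DesignIso {Ω₁ Ω₂ : Type*} (B₁ : Set (Finset Ω₁)) (B₂ : Set (Finset Ω₂)) : Prop :=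
  ∃ e : Ω₁ ≃ Ω₂, ∀ L : Finset Ω₁, L ∈ B₁ ↔ L.map e.toEmbedding ∈ B₂

/-- The lines of the Boolean quadruple system of order `2^m`: 4-subsets of `F_2^m`
summing to zero. -/
def booleanLines (m : ℕ) : Set (Finset (Fin m → ZMod 2)) :=
  { L | L.card = 4 ∧ ∑ v ∈ L, v = 0 }

/-- `V = F_2^{2m}`, with coordinates indexed by `Fin m ⊕ Fin m`. -/
abbrev Vsp (m : ℕ) := (Fin m ⊕ Fin m) → ZMod 2

/-- `θ(u) = u e uᵀ` where `e` is the block matrix `(0 I; 0 0)`. -/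
def theta {m : ℕ} (u : Vsp m) : ZMod 2 :=
  ∑ i : Fin m, u (Sum.inl i) * u (Sum.inr i)

/-- The lines of the design `D^a`: 4-subsets of `V` summing to zero on which `θ` sums
to zero. -/
def linesA (m : ℕ) : Set (Finset (Vsp m)) :=
  { L | L.card = 4 ∧ ∑ v ∈ L, v = 0 ∧ ∑ v ∈ L, theta v = 0 }

/-- The lines of the design `D^ε`: 4-subsets of `{v ∈ V : θ(v) = ε}` summing to zero. -/
def linesEps (m : ℕ) (ε : ZMod 2) : Set (Finset {v : Vsp m // theta v = ε}) :=
  { L | L.card = 4 ∧ ∑ v ∈ L, (v : Vsp m) = 0 }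

/-- The derived graph `G_{D,∞}`: vertices are the points other than `∞`, with `a, b`
adjacent iff `{∞,a,b}` is a collinear triple. -/
def derivedGraph [DecidableEq Ω] (B : Set (Finset Ω)) (inf : Ω) :
    SimpleGraph {x : Ω // x ≠ inf} where
  Adj a b := a ≠ b ∧ ({inf, (a : Ω), (b : Ω)} : Finset Ω) ∈ collinearTriples B
  symm := by
    constructor
    rintro a b ⟨hab, h⟩
    exact ⟨hab.symm, by rwa [Finset.pair_comm (b : Ω) (a : Ω)]⟩
  loopless := by constructor; rintro a ⟨h, -⟩; exact h rfl

/-- `w` witnesses the triangle property for the edge `{u,v}`: `w` is a common neighbour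
of `u` and `v`, and every other vertex is adjacent to exactly one or three of `u,v,w`. -/
def TriangleWitness {V : Type*} (G : SimpleGraph V) (u v w : V) : Prop :=
  G.Adj u w ∧ G.Adj v w ∧
  ∀ x : V, x ∉ ({u, v, w} : Set V) →
    ({y ∈ ({u, v, w} : Set V) | G.Adj x y}.ncard = 1 ∨
     {y ∈ ({u, v, w} : Set V) | G.Adj x y}.ncard = 3)

/-- The triangle property for a graph. -/
def HasTriangleProperty {V : Type*} (G : SimpleGraph V) : Prop :=
  (∃ u v, G.Adj u v) ∧ ∀ u v : V, G.Adj u v → ∃ w, TriangleWitness G u v w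

/-- The strong triangle property: each edge has a unique triangle-property witness. -/
def HasStrongTriangleProperty {V : Type*} (G : SimpleGraph V) : Prop :=
  (∃ u v, G.Adj u v) ∧ ∀ u v : V, G.Adj u v → ∃! w, TriangleWitness G u v w

/-- A coherent 4-subset: all four of its 3-element subsets lie in `C`. -/
def IsCoherent (C : Set (Finset Ω)) (q : Finset Ω) : Prop :=
  q.card = 4 ∧ ∀ t ⊆ q, t.card = 3 → t ∈ C

/-!
Every elementary move is an involution with `[a,b] = [b,a]`, so `g ↦ g [x,y]` is a bijection
between `L_x` and `L_y`. If `L_∞` is closed under composition it therefore absorbs every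
`[∞,x]` and equals every `L_x`; conversely, when all `L_x` coincide, concatenating a move
sequence ending at `x` with one starting at `x` shows closure. The inverse of a move sequence is
the reversed sequence, so a closed `L_∞` is a subgroup, and it contains (hence is) the group
generated by the moves. Finally `[∞,a₁,…,a_k]` sends `∞` to `a_k`, which identifies the
stabilizer of `∞` with `π_∞`.
-/

section Moves

variable [DecidableEq Ω] {B : Set (Finset Ω)}

lemma exists_fourth_point {L : Finset Ω} (hL : L.card = 4) {a b x : Ω}
    (hab : a ≠ b) (hxa : x ≠ a) (hxb : x ≠ b) (ha : a ∈ L) (hb : b ∈ L) (hx : x ∈ L) :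
    ∃ w, ({a, b, x, w} : Finset Ω) = L := by
  have hsub : ({a, b, x} : Finset Ω) ⊆ L := by
    simp only [Finset.insert_subset_iff, Finset.singleton_subset_iff]
    exact ⟨ha, hb, hx⟩
  have hcard : ({a, b, x} : Finset Ω).card + 1 = L.card := by
    rw [hL, Finset.card_eq_three.2 ⟨a, b, x, hab, hxa.symm, hxb.symm, rfl⟩]
  obtain ⟨w, -, hw⟩ := Finset.exists_eq_insert_iff.2 ⟨hsub, hcard⟩
  refine ⟨w, hw ▸ ?_⟩
  ext z
  simp only [Finset.mem_insert, Finset.mem_singleton]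
  tauto

lemma exists_line_or_not_collinear (hB : ∀ L ∈ B, L.card = 4) {a b x : Ω}
    (hab : a ≠ b) (hxa : x ≠ a) (hxb : x ≠ b) :
    (∃ w, ({a, b, x, w} : Finset Ω) ∈ B) ∨ ∀ L ∈ B, ¬(a ∈ L ∧ b ∈ L ∧ x ∈ L) := by
  by_cases h : ∃ L ∈ B, a ∈ L ∧ b ∈ L ∧ x ∈ L
  · obtain ⟨L, hL, ha, hb, hx⟩ := h
    obtain ⟨w, hw⟩ := exists_fourth_point (hB L hL) hab hxa hxb ha hb hx
    exact .inl ⟨w, hw ▸ hL⟩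
  · exact .inr fun L hL habx => h ⟨L, hL, habx⟩

namespace IsElemMoveFn

variable {mv : Ω → Ω → Perm Ω}

lemma apply_left (hmv : IsElemMoveFn B mv) (a b : Ω) : mv a b a = b := by
  rcases eq_or_ne a b with rfl | hab
  · rw [hmv.1]; rfl
  · exact (hmv.2 a b hab).1

lemma comm (hmv : IsElemMoveFn B mv) (hB : ∀ L ∈ B, L.card = 4) (a b : Ω) :
    mv a b = mv b a := by
  rcases eq_or_ne a b with rfl | hab
  · rfl
  obtain ⟨hab_a, hab_b, hab_line, hab_fix⟩ := hmv.2 a b hab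
  obtain ⟨hba_b, hba_a, hba_line, hba_fix⟩ := hmv.2 b a hab.symm
  ext x
  rcases eq_or_ne x a with rfl | hxa
  · rw [hab_a, hba_a]
  rcases eq_or_ne x b with rfl | hxb
  · rw [hab_b, hba_b]
  rcases exists_line_or_not_collinear hB hab hxa hxb with ⟨w, hw⟩ | hnot
  · rw [hab_line x w hw, hba_line x w (by rwa [Finset.insert_comm])]
  · rw [hab_fix x hxa hxb hnot,
      hba_fix x hxb hxa fun L hL ⟨hb, ha, hx⟩ => hnot L hL ⟨ha, hb, hx⟩]

lemma mul_self (hmv : IsElemMoveFn B mv) (hB : ∀ L ∈ B, L.card = 4) (a b : Ω) :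
    mv a b * mv a b = 1 := by
  rcases eq_or_ne a b with rfl | hab
  · rw [hmv.1, one_mul]
  obtain ⟨h_a, h_b, h_line, h_fix⟩ := hmv.2 a b hab
  ext x
  rw [Perm.mul_apply, Perm.one_apply]
  rcases eq_or_ne x a with rfl | hxa
  · rw [h_a, h_b]
  rcases eq_or_ne x b with rfl | hxb
  · rw [h_b, h_a]
  rcases exists_line_or_not_collinear hB hab hxa hxb with ⟨w, hw⟩ | hnot
  · have hw' : ({a, b, w, x} : Finset Ω) ∈ B := by
      rwa [Finset.pair_comm]
    rw [h_line x w hw, h_line w x hw']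
  · rw [h_fix x hxa hxb hnot, h_fix x hxa hxb hnot]

lemma inv_eq (hmv : IsElemMoveFn B mv) (hB : ∀ L ∈ B, L.card = 4) (a b : Ω) :
    (mv a b)⁻¹ = mv b a := by
  rw [inv_eq_of_mul_eq_one_right (hmv.mul_self hB a b), hmv.comm hB]

end IsElemMoveFn

end Moves

section MoveSequences

variable {mv : Ω → Ω → Perm Ω}

lemma moveSeq_append (a : Ω) (l l' : List Ω) :
    moveSeq mv a (l ++ l') = moveSeq mv (l.getLastD a) l' * moveSeq mv a l := by
  induction l generalizing a with
  | nil => exact (mul_one _).symm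
  | cons b t ih =>
    change moveSeq mv b (t ++ l') * mv a b = _
    rw [ih b, List.getLastD_cons, mul_assoc]
    rfl

lemma moveSeq_apply_self (happly : ∀ a b, mv a b a = b) (a : Ω) (l : List Ω) :
    moveSeq mv a l a = l.getLastD a := by
  induction l generalizing a with
  | nil => rfl
  | cons b t ih =>
    change (moveSeq mv b t * mv a b) a = _
    rw [Perm.mul_apply, happly, ih b, List.getLastD_cons]

/-- The inverse of `[a, b₁, …, b_k]` is the reversed sequence `[b_k, …, b₁, a]`. -/
lemma exists_inv_moveSeq (hinv : ∀ a b, (mv a b)⁻¹ = mv b a) (a : Ω) (l : List Ω) :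
    ∃ l', (moveSeq mv a l)⁻¹ = moveSeq mv (l.getLastD a) l' ∧
      l'.getLastD (l.getLastD a) = a := by
  induction l generalizing a with
  | nil => exact ⟨[], inv_one, rfl⟩
  | cons b t ih =>
    obtain ⟨l', hl', hend⟩ := ih b
    refine ⟨l' ++ [a], ?_, List.getLastD_concat⟩
    rw [List.getLastD_cons]
    change (moveSeq mv b t * mv a b)⁻¹ = _
    rw [mul_inv_rev, hl', moveSeq_append, hend, hinv]
    exact congrArg (· * _) (one_mul _).symm

lemma moveSeq_mem_closure (a : Ω) (l : List Ω) :
    moveSeq mv a l ∈ Subgroup.closure {g : Perm Ω | ∃ a b : Ω, g = mv a b} := by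
  induction l generalizing a with
  | nil => exact Subgroup.one_mem _
  | cons b t ih => exact Subgroup.mul_mem _ (ih b) (Subgroup.subset_closure ⟨a, b, rfl⟩)

end MoveSequences

namespace ConwayGroupoid

variable {mv : Ω → Ω → Perm Ω}

lemma mv_mem (x y : Ω) : mv x y ∈ ConwayGroupoid mv x :=
  ⟨[y], (one_mul _).symm⟩

lemma mul_moveSeq_mem {x : Ω} {l : List Ω} {g : Perm Ω}
    (hg : g ∈ ConwayGroupoid mv (l.getLastD x)) : g * moveSeq mv x l ∈ ConwayGroupoid mv x := by
  obtain ⟨l', rfl⟩ := hg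
  exact ⟨l ++ l', (moveSeq_append x l l').symm⟩

lemma mem_iff_mul_mem (hinv : ∀ a b, (mv a b)⁻¹ = mv b a) {x y : Ω} {g : Perm Ω} :
    g ∈ ConwayGroupoid mv x ↔ g * mv y x ∈ ConwayGroupoid mv y := by
  constructor
  · rintro ⟨l, rfl⟩
    exact ⟨x :: l, rfl⟩
  · rintro ⟨l, hl⟩
    refine ⟨y :: l, ?_⟩
    change g = moveSeq mv y l * mv x y
    rw [← hl, ← hinv, inv_mul_cancel_right]

lemma eq_of_mul_mem (hinv : ∀ a b, (mv a b)⁻¹ = mv b a) (hcomm : ∀ a b, mv a b = mv b a)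
    {z : Ω} (hcl : ∀ g ∈ ConwayGroupoid mv z, ∀ h ∈ ConwayGroupoid mv z,
      g * h ∈ ConwayGroupoid mv z) (x : Ω) :
    ConwayGroupoid mv x = ConwayGroupoid mv z := by
  ext g
  rw [mem_iff_mul_mem hinv (y := z)]
  constructor
  · intro hgz
    have hmv : (mv z x)⁻¹ ∈ ConwayGroupoid mv z := by
      rw [hinv, hcomm]; exact mv_mem z x
    simpa using hcl _ hgz _ hmv
  · exact fun hg => hcl g hg _ (mv_mem z x)

lemma allMoveSeqs_eq_iUnion : allMoveSeqs mv = ⋃ x, ConwayGroupoid mv x := by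
  ext g
  simp only [Set.mem_iUnion]
  rfl

lemma mul_mem_of_allMoveSeqs_eq (hall : ∀ x, allMoveSeqs mv = ConwayGroupoid mv x) (z : Ω) :
    ∀ g ∈ ConwayGroupoid mv z, ∀ h ∈ ConwayGroupoid mv z, g * h ∈ ConwayGroupoid mv z := by
  rintro g hg h ⟨l, rfl⟩
  refine mul_moveSeq_mem ?_
  rw [← hall]
  exact ⟨z, hg⟩

lemma closure_subset (hinv : ∀ a b, (mv a b)⁻¹ = mv b a) {z : Ω}
    (hall : ∀ x, ConwayGroupoid mv x = ConwayGroupoid mv z)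
    (hcl : ∀ g ∈ ConwayGroupoid mv z, ∀ h ∈ ConwayGroupoid mv z,
      g * h ∈ ConwayGroupoid mv z) :
    ((Subgroup.closure {g : Perm Ω | ∃ a b : Ω, g = mv a b} : Subgroup (Perm Ω)) :
      Set (Perm Ω)) ⊆ ConwayGroupoid mv z := by
  intro g hg
  induction hg using Subgroup.closure_induction with
  | mem g hg =>
    obtain ⟨a, b, rfl⟩ := hg
    exact hall a ▸ mv_mem a b
  | one => exact ⟨[], rfl⟩
  | mul g h _ _ hg hh => exact hcl g hg h hh
  | inv g _ hg =>
    obtain ⟨l, rfl⟩ := hg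
    obtain ⟨l', hl', -⟩ := exists_inv_moveSeq hinv z l
    exact hall (l.getLastD z) ▸ ⟨l', hl'⟩

lemma stabilizer_eq_holeStabilizer (hself : ∀ a, mv a a = 1) (happly : ∀ a b, mv a b a = b) (x : Ω) :
    {g ∈ ConwayGroupoid mv x | g x = x} = holeStabilizer mv x := by
  ext g
  constructor
  · rintro ⟨⟨l, rfl⟩, hfix⟩
    rw [moveSeq_apply_self happly] at hfix
    rcases l.eq_nil_or_concat with rfl | ⟨l', b, rfl⟩
    · refine ⟨[], ?_⟩
      change (1 : Perm Ω) = 1 * mv x x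
      rw [hself, one_mul]
    · rw [List.concat_eq_append, List.getLastD_concat] at hfix
      exact ⟨l', by rw [List.concat_eq_append, hfix]⟩
  · rintro ⟨l, rfl⟩
    exact ⟨⟨_, rfl⟩, by rw [moveSeq_apply_self happly, List.getLastD_concat]⟩

end ConwayGroupoid

theorem conwayGroupoid_group_tfae_general [Fintype Ω] [DecidableEq Ω]
    {B : Set (Finset Ω)} {n lam : ℕ}
    (hD : IsDesign B n lam)
    (mv : Ω → Ω → Equiv.Perm Ω) (hmv : IsElemMoveFn B mv) (inf : Ω) :
    ((∀ g ∈ ConwayGroupoid mv inf, ∀ h ∈ ConwayGroupoid mv inf,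
        g * h ∈ ConwayGroupoid mv inf) ↔
      (ConwayGroupoid mv inf = allMoveSeqs mv ∧
       ConwayGroupoid mv inf =
         ((Subgroup.closure {g : Equiv.Perm Ω | ∃ a b : Ω, g = mv a b} :
           Subgroup (Equiv.Perm Ω)) : Set (Equiv.Perm Ω)))) ∧
    ((∀ g ∈ ConwayGroupoid mv inf, ∀ h ∈ ConwayGroupoid mv inf,
        g * h ∈ ConwayGroupoid mv inf) ↔
      (∀ x : Ω, allMoveSeqs mv = ConwayGroupoid mv x)) ∧
    ((∀ g ∈ ConwayGroupoid mv inf, ∀ h ∈ ConwayGroupoid mv inf,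
        g * h ∈ ConwayGroupoid mv inf) →
      SetTransitiveOn (ConwayGroupoid mv inf) Set.univ ∧
      {g ∈ ConwayGroupoid mv inf | g inf = inf} = holeStabilizer mv inf) := by
  have hinv := hmv.inv_eq hD.2.1
  have hcomm := hmv.comm hD.2.1
  have hall_eq (hcl : ∀ g ∈ ConwayGroupoid mv inf, ∀ h ∈ ConwayGroupoid mv inf,
      g * h ∈ ConwayGroupoid mv inf) : ∀ x, allMoveSeqs mv = ConwayGroupoid mv x := by
    have : Nonempty Ω := ⟨inf⟩
    intro x
    simp only [ConwayGroupoid.allMoveSeqs_eq_iUnion,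
      ConwayGroupoid.eq_of_mul_mem hinv hcomm hcl, Set.iUnion_const]
  refine ⟨⟨fun hcl => ⟨(hall_eq hcl inf).symm, ?_⟩, ?_⟩,
    ⟨hall_eq, fun hall => ConwayGroupoid.mul_mem_of_allMoveSeqs_eq hall inf⟩,
    fun hcl => ⟨?_, ConwayGroupoid.stabilizer_eq_holeStabilizer hmv.1 hmv.apply_left inf⟩⟩
  · refine (ConwayGroupoid.closure_subset hinv (ConwayGroupoid.eq_of_mul_mem hinv hcomm hcl)
      hcl).antisymm' ?_
    rintro g ⟨l, rfl⟩
    exact moveSeq_mem_closure inf l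
  · rintro ⟨-, hclosure⟩
    rw [hclosure]
    exact fun g hg h hh => Subgroup.mul_mem _ hg hh
  · intro x _ y _
    exact ⟨mv x y, ConwayGroupoid.eq_of_mul_mem hinv hcomm hcl x ▸ ConwayGroupoid.mv_mem x y,
      hmv.apply_left x y⟩

/-- Lemma 2.7: for a supersimple `2-(n,4,λ)` design and `∞ ∈ Ω`,
with `G = L_∞(D)`, the following are equivalent: (i) `G` is closed under composition;
(ii) `G = L(D)` and `G` is the subgroup generated by all elementary moves;
(iii) `L(D) = L_x(D)` for all `x ∈ Ω`. Moreover if these hold then `G` is transitive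
on `Ω` and the stabilizer of `∞` in `G` is `π_∞(D)`. -/
theorem conwayGroupoid_group_tfae [Fintype Ω] [DecidableEq Ω]
    {B : Set (Finset Ω)} {n lam : ℕ}
    (hD : IsDesign B n lam) (hss : Supersimple B)
    (mv : Ω → Ω → Equiv.Perm Ω) (hmv : IsElemMoveFn B mv) (inf : Ω) :
    ((∀ g ∈ ConwayGroupoid mv inf, ∀ h ∈ ConwayGroupoid mv inf,
        g * h ∈ ConwayGroupoid mv inf) ↔
      (ConwayGroupoid mv inf = allMoveSeqs mv ∧
       ConwayGroupoid mv inf =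
         ((Subgroup.closure {g : Equiv.Perm Ω | ∃ a b : Ω, g = mv a b} :
           Subgroup (Equiv.Perm Ω)) : Set (Equiv.Perm Ω)))) ∧
    ((∀ g ∈ ConwayGroupoid mv inf, ∀ h ∈ ConwayGroupoid mv inf,
        g * h ∈ ConwayGroupoid mv inf) ↔
      (∀ x : Ω, allMoveSeqs mv = ConwayGroupoid mv x)) ∧
    ((∀ g ∈ ConwayGroupoid mv inf, ∀ h ∈ ConwayGroupoid mv inf,
        g * h ∈ ConwayGroupoid mv inf) →
      SetTransitiveOn (ConwayGroupoid mv inf) Set.univ ∧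
      {g ∈ ConwayGroupoid mv inf | g inf = inf} = holeStabilizer mv inf) :=
  conwayGroupoid_group_tfae_general hD mv hmv inf
end

section
/- Assume Hypotheses 4.1. If {w,x,y,z} ∈ B is a line, then the elementary moves satisfy [w,x] = [y,z]. -/
open Equiv

variable {Ω : Type*}

/-! Both moves interchange `w ↔ x` and `y ↔ z`. If a point `p` off the line `L = {w,x,y,z}`
lies on a line `L' = {w,x,p,q}`, supersimplicity forces `L ∩ L' = {w,x}`, so by (△) the
symmetric difference `{y,z,p,q}` is a line and both moves send `p` to `q`. The same argument
shows that `p` is collinear with `y,z` only if it is collinear with `w,x`; otherwise both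
moves fix `p`. -/

open Finset

section Lines

variable [DecidableEq Ω] {B : Set (Finset Ω)} {L L' : Finset Ω} {a b c d : Ω}

theorem Finset.eq_of_card_eq_four (hL : L.card = 4) (habcd : {a, b, c, d} ⊆ L)
    (hab : a ≠ b) (hac : a ≠ c) (had : a ≠ d) (hbc : b ≠ c) (hbd : b ≠ d) (hcd : c ≠ d) :
    L = {a, b, c, d} :=
  (eq_of_subset_of_card_le habcd
    (by rw [hL, card_eq_four.2 ⟨a, b, c, d, hab, hac, had, hbc, hbd, hcd, rfl⟩])).symm

theorem Finset.ne_of_card_eq_four (h : ({a, b, c, d} : Finset Ω).card = 4) :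
    a ≠ b ∧ a ≠ c ∧ a ≠ d ∧ b ≠ c ∧ b ≠ d ∧ c ≠ d := by
  grind

theorem Finset.quad_comm (a b c d : Ω) : ({a, b, c, d} : Finset Ω) = {c, d, a, b} := by
  ext
  simp only [mem_insert, mem_singleton]
  tauto

theorem Supersimple.inter_eq_pair (hss : Supersimple B) (hL : L ∈ B) (hL' : L' ∈ B)
    (hne : L ≠ L') (hab : a ≠ b) (habL : {a, b} ⊆ L ∩ L') : L ∩ L' = {a, b} :=
  (eq_of_subset_of_card_le habL ((hss L hL L' hL' hne).trans (card_pair hab).ge)).symm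

theorem Supersimple.notMem_of_mem (hss : Supersimple B) (hL : L ∈ B) (hL' : L' ∈ B)
    (hne : L ≠ L') (hab : a ≠ b) (habL : {a, b} ⊆ L ∩ L') (hc : c ∈ L) (hca : c ≠ a)
    (hcb : c ≠ b) : c ∉ L' := fun hc' => by
  have := hss.inter_eq_pair hL hL' hne hab habL ▸ mem_inter.2 ⟨hc, hc'⟩
  simp [hca, hcb] at this

theorem SymmDiffCond.symmDiff_mem (hsd : SymmDiffCond B) (hss : Supersimple B) (hL : L ∈ B)
    (hL' : L' ∈ B) (hne : L ≠ L') (hab : a ≠ b) (habL : {a, b} ⊆ L ∩ L') :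
    symmDiff L L' ∈ B :=
  hsd L hL L' hL' (by rw [hss.inter_eq_pair hL hL' hne hab habL, card_pair hab])

end Lines

section ElementaryMoves

variable [DecidableEq Ω] {B : Set (Finset Ω)} {mv : Ω → Ω → Equiv.Perm Ω} {a b c d : Ω}

theorem IsElemMoveFn.apply_left_s10 (hmv : IsElemMoveFn B mv) (hab : a ≠ b) : mv a b a = b :=
  (hmv.2 a b hab).1

theorem IsElemMoveFn.apply_right (hmv : IsElemMoveFn B mv) (hab : a ≠ b) : mv a b b = a :=
  (hmv.2 a b hab).2.1

theorem IsElemMoveFn.apply_of_mem (hmv : IsElemMoveFn B mv) (hab : a ≠ b)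
    (h : ({a, b, c, d} : Finset Ω) ∈ B) : mv a b c = d :=
  (hmv.2 a b hab).2.2.1 c d h

theorem IsElemMoveFn.apply_of_mem' (hmv : IsElemMoveFn B mv) (hab : a ≠ b)
    (h : ({a, b, c, d} : Finset Ω) ∈ B) : mv a b d = c :=
  hmv.apply_of_mem hab (pair_comm c d ▸ h)

theorem IsElemMoveFn.apply_eq_self (hmv : IsElemMoveFn B mv) (hab : a ≠ b) (hca : c ≠ a)
    (hcb : c ≠ b) (hc : ¬∃ L ∈ B, a ∈ L ∧ b ∈ L ∧ c ∈ L) : mv a b c = c :=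
  (hmv.2 a b hab).2.2.2 c hca hcb fun L hL habc => hc ⟨L, hL, habc⟩

end ElementaryMoves

section LineSwap

variable [DecidableEq Ω] {B : Set (Finset Ω)} {mv : Ω → Ω → Equiv.Perm Ω}
  {w x y z p : Ω}

theorem elemMove_apply_eq_of_collinear (hcard : ∀ L ∈ B, L.card = 4) (hss : Supersimple B)
    (hsd : SymmDiffCond B) (hmv : IsElemMoveFn B mv) (hline : ({w, x, y, z} : Finset Ω) ∈ B)
    (hp : p ∉ ({w, x, y, z} : Finset Ω)) {L' : Finset Ω} (hL' : L' ∈ B) (hwL' : w ∈ L')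
    (hxL' : x ∈ L') (hpL' : p ∈ L') : mv w x p = mv y z p := by
  obtain ⟨hwx, hwy, hwz, hxy, hxz, hyz⟩ := ne_of_card_eq_four (hcard _ hline)
  simp only [mem_insert, mem_singleton, not_or] at hp
  obtain ⟨hpw, hpx, hpy, hpz⟩ := hp
  obtain ⟨q, hqL', hq⟩ := exists_mem_notMem_of_card_lt_card
    (s := {w, x, p}) (card_le_three.trans_lt (by rw [hcard _ hL']; norm_num))
  simp only [mem_insert, mem_singleton, not_or] at hq
  obtain ⟨hqw, hqx, hqp⟩ := hq
  have hne : ({w, x, y, z} : Finset Ω) ≠ L' := by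
    rintro rfl
    simp_all
  have hwxL : {w, x} ⊆ ({w, x, y, z} : Finset Ω) ∩ L' := by
    simp [insert_subset_iff, hwL', hxL']
  have hyL' : y ∉ L' := hss.notMem_of_mem hline hL' hne hwx hwxL (by simp) hwy.symm hxy.symm
  have hzL' : z ∉ L' := hss.notMem_of_mem hline hL' hne hwx hwxL (by simp) hwz.symm hxz.symm
  have hqL : q ∉ ({w, x, y, z} : Finset Ω) :=
    hss.notMem_of_mem hL' hline hne.symm hwx (inter_comm L' _ ▸ hwxL) hqL' hqw hqx
  simp only [mem_insert, mem_singleton, not_or] at hqL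
  obtain ⟨-, -, hqy, hqz⟩ := hqL
  have hM := hsd.symmDiff_mem hss hline hL' hne hwx hwxL
  have hM_eq : symmDiff ({w, x, y, z} : Finset Ω) L' = {y, z, p, q} := by
    refine eq_of_card_eq_four (hcard _ hM) ?_ hyz (Ne.symm hpy) (Ne.symm hqy) (Ne.symm hpz)
      (Ne.symm hqz) (Ne.symm hqp)
    simp [insert_subset_iff, mem_symmDiff, *]
  have hL'_eq : L' = {w, x, p, q} :=
    eq_of_card_eq_four (hcard _ hL') (by simp [insert_subset_iff, *]) hwx (Ne.symm hpw)
      (Ne.symm hqw) (Ne.symm hpx) (Ne.symm hqx) (Ne.symm hqp)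
  rw [hmv.apply_of_mem hwx (hL'_eq ▸ hL'), hmv.apply_of_mem hyz (hM_eq ▸ hM)]

theorem exists_collinear_of_collinear (hcard : ∀ L ∈ B, L.card = 4) (hss : Supersimple B)
    (hsd : SymmDiffCond B) (hline : ({w, x, y, z} : Finset Ω) ∈ B)
    (hp : p ∉ ({w, x, y, z} : Finset Ω)) (hyzp : ∃ L ∈ B, y ∈ L ∧ z ∈ L ∧ p ∈ L) :
    ∃ L ∈ B, w ∈ L ∧ x ∈ L ∧ p ∈ L := by
  obtain ⟨hwx, hwy, hwz, hxy, hxz, hyz⟩ := ne_of_card_eq_four (hcard _ hline)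
  obtain ⟨L', hL', hyL', hzL', hpL'⟩ := hyzp
  have hne : ({w, x, y, z} : Finset Ω) ≠ L' := by
    rintro rfl
    exact hp hpL'
  have hyzL : {y, z} ⊆ ({w, x, y, z} : Finset Ω) ∩ L' := by
    simp [insert_subset_iff, hyL', hzL']
  have hwL' := hss.notMem_of_mem hline hL' hne hyz hyzL (by simp) hwy hwz
  have hxL' := hss.notMem_of_mem hline hL' hne hyz hyzL (by simp) hxy hxz
  exact ⟨_, hsd.symmDiff_mem hss hline hL' hne hyz hyzL, mem_symmDiff.2 (.inl ⟨by simp, hwL'⟩),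
    mem_symmDiff.2 (.inl ⟨by simp, hxL'⟩), mem_symmDiff.2 (.inr ⟨hpL', hp⟩)⟩

theorem elemMove_apply_eq_of_notMem (hcard : ∀ L ∈ B, L.card = 4) (hss : Supersimple B)
    (hsd : SymmDiffCond B) (hmv : IsElemMoveFn B mv) (hline : ({w, x, y, z} : Finset Ω) ∈ B)
    (hp : p ∉ ({w, x, y, z} : Finset Ω)) : mv w x p = mv y z p := by
  by_cases hwxp : ∃ L ∈ B, w ∈ L ∧ x ∈ L ∧ p ∈ L
  · obtain ⟨L', hL', hwL', hxL', hpL'⟩ := hwxp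
    exact elemMove_apply_eq_of_collinear hcard hss hsd hmv hline hp hL' hwL' hxL' hpL'
  · have hyzp := mt (exists_collinear_of_collinear hcard hss hsd hline hp) hwxp
    obtain ⟨hwx, -, -, -, -, hyz⟩ := ne_of_card_eq_four (hcard _ hline)
    simp only [mem_insert, mem_singleton, not_or] at hp
    rw [hmv.apply_eq_self hwx hp.1 hp.2.1 hwxp, hmv.apply_eq_self hyz hp.2.2.1 hp.2.2.2 hyzp]

end LineSwap

theorem elemMove_eq_of_line_general [Fintype Ω] [DecidableEq Ω]
    {B : Set (Finset Ω)} {n lam : ℕ}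
    (hD : IsDesign B n lam) (hss : Supersimple B) (hsd : SymmDiffCond B)
    (mv : Ω → Ω → Equiv.Perm Ω) (hmv : IsElemMoveFn B mv)
    (w x y z : Ω) (hline : ({w, x, y, z} : Finset Ω) ∈ B) :
    mv w x = mv y z := by
  have hcard := hD.2.1
  obtain ⟨hwx, -, -, -, -, hyz⟩ := ne_of_card_eq_four (hcard _ hline)
  have hline' : ({y, z, w, x} : Finset Ω) ∈ B := quad_comm w x y z ▸ hline
  ext p
  by_cases hp : p ∈ ({w, x, y, z} : Finset Ω)
  · simp only [mem_insert, mem_singleton] at hp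
    rcases hp with rfl | rfl | rfl | rfl
    · rw [hmv.apply_left_s10 hwx, hmv.apply_of_mem hyz hline']
    · rw [hmv.apply_right hwx, hmv.apply_of_mem' hyz hline']
    · rw [hmv.apply_of_mem hwx hline, hmv.apply_left_s10 hyz]
    · rw [hmv.apply_of_mem' hwx hline, hmv.apply_right hyz]
  · exact elemMove_apply_eq_of_notMem hcard hss hsd hmv hline hp

/-- Lemma 4.3: under Hypotheses 4.1, if `{w,x,y,z}` is a line then
`[w,x] = [y,z]`. -/
theorem elemMove_eq_of_line [Fintype Ω] [DecidableEq Ω]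
    {B : Set (Finset Ω)} {n lam : ℕ}
    (hD : IsDesign B n lam) (hss : Supersimple B) (hsd : SymmDiffCond B)
    (hRT : IsRegularTwoGraph (collinearTriples B))
    (mv : Ω → Ω → Equiv.Perm Ω) (hmv : IsElemMoveFn B mv)
    (w x y z : Ω) (hline : ({w, x, y, z} : Finset Ω) ∈ B) :
    mv w x = mv y z :=
  elemMove_eq_of_line_general hD hss hsd mv hmv w x y z hline
end
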